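/- arXiv:2002.01910 — 4 statements merged into one kernel-verified Lean document; each statement's English description precedes it below -/
import Mathlib

section
/- Let V be a finite set with probability weights p : V → ℝ (p i ≥ 0 for all i and Σ_{i∈V} p i = 1), let μ be the probability measure on V with μ({i}) = p i, and let n_S ≥ 1. Under the product measure μ^{⊗ n_S} on functions f : Fin n_S → V, for any two distinct nodes i ≠ j in V, the probability of the event {f | (∃ k, f k = i) ∧ (∃ k, f k = j)}, i.e. the probability that both i and j belong to the sampled node set, equals 1 − [(1 − p i)^{n_S} + (1 − p j)^{n_S} − (1 − p i − p j)^{n_S}]. -/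
open MeasureTheory

theorem fastgae_prob_pair_sampled_with_replacement
    {V : Type*} [Fintype V] [MeasurableSpace V] [MeasurableSingletonClass V]
    (p : V → ℝ) (hp : ∀ i, 0 ≤ p i) (hsum : ∑ i, p i = 1)
    (μ : Measure V) [IsProbabilityMeasure μ]
    (hμ : ∀ i, μ {i} = ENNReal.ofReal (p i))
    (nS : ℕ) (hnS : 1 ≤ nS) (i j : V) (hij : i ≠ j) :
    ((Measure.pi fun _ : Fin nS => μ)
        {f | (∃ k, f k = i) ∧ (∃ k, f k = j)}).toReal
      = 1 - ((1 - p i) ^ nS + (1 - p j) ^ nS - (1 - p i - p j) ^ nS) := by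
  classical
  set π := Measure.pi fun _ : Fin nS => μ with hπdef
  have hπprob : IsProbabilityMeasure π := by infer_instance
  -- basic real facts
  have hpi1 : p i ≤ 1 := hsum ▸ Finset.single_le_sum (fun k _ => hp k) (Finset.mem_univ i)
  have hpij : p i + p j ≤ 1 := by
    have h := Finset.sum_le_sum_of_subset_of_nonneg (Finset.subset_univ ({i, j} : Finset V))
      (fun k _ _ => hp k)
    rwa [Finset.sum_pair hij, hsum] at h
  have hpj1 : p j ≤ 1 := le_trans (le_add_of_nonneg_left (hp i)) hpij
  have ha0 : (0:ℝ) ≤ 1 - p i := by linarith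
  have hb0 : (0:ℝ) ≤ 1 - p j := by linarith
  have hc0 : (0:ℝ) ≤ 1 - p i - p j := by linarith
  -- key: measure of "all coordinates in s"
  have key : ∀ s : Set V, π {f | ∀ k, f k ∈ s} = μ s ^ nS := by
    intro s
    have hset : {f : Fin nS → V | ∀ k, f k ∈ s} = Set.pi Set.univ (fun _ => s) := by
      ext f; simp [Set.mem_pi]
    rw [hset, hπdef, Measure.pi_pi]
    simp
  -- measures of complements in V
  have hci : μ ({i}ᶜ) = ENNReal.ofReal (1 - p i) := by
    rw [measure_compl (measurableSet_singleton i) (measure_ne_top μ _), measure_univ, hμ,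
      ENNReal.ofReal_sub _ (hp i), ENNReal.ofReal_one]
  have hcj : μ ({j}ᶜ) = ENNReal.ofReal (1 - p j) := by
    rw [measure_compl (measurableSet_singleton j) (measure_ne_top μ _), measure_univ, hμ,
      ENNReal.ofReal_sub _ (hp j), ENNReal.ofReal_one]
  have hij2 : μ (({i, j} : Set V)) = ENNReal.ofReal (p i + p j) := by
    rw [Set.insert_eq, measure_union (by simp [hij]) (measurableSet_singleton j), hμ, hμ,
      ENNReal.ofReal_add (hp i) (hp j)]
  have hcij : μ (({i, j} : Set V)ᶜ) = ENNReal.ofReal (1 - p i - p j) := by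
    rw [measure_compl (by measurability) (measure_ne_top μ _), measure_univ, hij2]
    rw [show (1:ℝ) - p i - p j = 1 - (p i + p j) by ring,
      ENNReal.ofReal_sub _ (by linarith [hp i, hp j]), ENNReal.ofReal_one]
  -- the events
  set A : Set (Fin nS → V) := {f | ∃ k, f k = i} with hA
  set B : Set (Fin nS → V) := {f | ∃ k, f k = j} with hB
  have hAm : MeasurableSet A := by
    have : A = ⋃ k, (fun f : Fin nS → V => f k) ⁻¹' {i} := by ext f; simp [hA]
    rw [this]
    exact MeasurableSet.iUnion fun k => measurable_pi_apply k (measurableSet_singleton i)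
  have hBm : MeasurableSet B := by
    have : B = ⋃ k, (fun f : Fin nS → V => f k) ⁻¹' {j} := by ext f; simp [hB]
    rw [this]
    exact MeasurableSet.iUnion fun k => measurable_pi_apply k (measurableSet_singleton j)
  -- complements as product sets
  have hAc : π Aᶜ = ENNReal.ofReal ((1 - p i) ^ nS) := by
    have : Aᶜ = {f : Fin nS → V | ∀ k, f k ∈ ({i}ᶜ : Set V)} := by
      ext f; simp [hA]
    rw [this, key, hci, ← ENNReal.ofReal_pow ha0]
  have hBc : π Bᶜ = ENNReal.ofReal ((1 - p j) ^ nS) := by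
    have : Bᶜ = {f : Fin nS → V | ∀ k, f k ∈ ({j}ᶜ : Set V)} := by
      ext f; simp [hB]
    rw [this, key, hcj, ← ENNReal.ofReal_pow hb0]
  have hABc : π (Aᶜ ∩ Bᶜ) = ENNReal.ofReal ((1 - p i - p j) ^ nS) := by
    have : Aᶜ ∩ Bᶜ = {f : Fin nS → V | ∀ k, f k ∈ (({i, j} : Set V)ᶜ)} := by
      ext f
      simp only [hA, hB, Set.mem_inter_iff, Set.mem_compl_iff, Set.mem_setOf_eq,
        Set.mem_insert_iff, Set.mem_singleton_iff, not_exists, not_or]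
      constructor
      · rintro ⟨h1, h2⟩ k; exact ⟨h1 k, h2 k⟩
      · intro h; exact ⟨fun k => (h k).1, fun k => (h k).2⟩
    rw [this, key, hcij, ← ENNReal.ofReal_pow hc0]
  -- inclusion-exclusion on the union, in ℝ
  have hUnion : (π (Aᶜ ∪ Bᶜ)).toReal
      = (1 - p i) ^ nS + (1 - p j) ^ nS - (1 - p i - p j) ^ nS := by
    have h := measure_union_add_inter (μ := π) Aᶜ hBm.compl
    rw [hAc, hBc, hABc] at h
    have h' := congrArg ENNReal.toReal h
    rw [ENNReal.toReal_add (measure_ne_top π _) (by simp),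
      ENNReal.toReal_add (by simp) (by simp),
      ENNReal.toReal_ofReal (pow_nonneg ha0 _), ENNReal.toReal_ofReal (pow_nonneg hb0 _),
      ENNReal.toReal_ofReal (pow_nonneg hc0 _)] at h'
    linarith
  -- finish
  have hcompl : A ∩ B = (Aᶜ ∪ Bᶜ)ᶜ := by
    rw [Set.compl_union, compl_compl, compl_compl]
  have hle : π (Aᶜ ∪ Bᶜ) ≤ π Set.univ := measure_mono (Set.subset_univ _)
  calc (π (A ∩ B)).toReal
      = (π Set.univ - π (Aᶜ ∪ Bᶜ)).toReal := by
        rw [hcompl, measure_compl (hAm.compl.union hBm.compl) (measure_ne_top π _)]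
    _ = 1 - ((1 - p i) ^ nS + (1 - p j) ^ nS - (1 - p i - p j) ^ nS) := by
        rw [ENNReal.toReal_sub_of_le hle (measure_ne_top π _), measure_univ,
          ENNReal.toReal_one, hUnion]
end

section
/- Let n ≥ 1 be an integer, 0 < ε < 1, 0 < α < 1 and γ > 0 real parameters, and let ℓ : Fin n → ℝ satisfy 0 ≤ ℓ j ≤ −log ε for every j. Let n_S be an integer with 1 ≤ n_S ≤ n and n_S ≥ √n · √((−log(α/2)) · (log ε)² / (2 γ²)). Let S be a uniformly random n_S-element subset of Fin n (uniform distribution over all subsets of cardinality n_S) and define L = (1/n_S) Σ_{j ∈ S} ℓ j. Then P(|L − E[L]| ≥ γ) ≤ α. -/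
/-!
Chernoff's method for sampling without replacement. Writing `exp (t * ∑ j ∈ S, ℓ j)` as
`∏ j ∈ S, exp (t * ℓ j)`, its average over the `k`-subsets `S` is the normalised elementary
symmetric function of the numbers `exp (t * ℓ j)`, which by Maclaurin's inequality is at most the
`k`-th power of their mean; Hoeffding's lemma bounds that mean by
`exp (t * mean ℓ + (b - a) ^ 2 * t ^ 2 / 8)`. Taking `t = 4 γ / (b - a) ^ 2` bounds each one-sided
tail by `exp (-2 k γ ^ 2 / (b - a) ^ 2)`, and the threshold on `n_S` makes twice this at most `α`.
Maclaurin's inequality itself follows by induction on the population, the induction step being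
Bernoulli's inequality `x ^ (k + 1) + (k + 1) x ^ k d ≤ (x + d) ^ (k + 1)`.
-/

open scoped Classical NNReal
open Finset Real MeasureTheory ProbabilityTheory

theorem choose_mul_pow_add_mul_choose_mul_pow_le (m k : ℕ) {x a : ℝ} (hx : 0 ≤ x) (ha : 0 ≤ a) :
    (m.choose (k + 1) : ℝ) * x ^ (k + 1) + a * ((m.choose k : ℝ) * x ^ k)
      ≤ ((m + 1).choose (k + 1) : ℝ) * ((a + m * x) / (m + 1)) ^ (k + 1) := by
  set d := (a - x) / (m + 1) with hd
  have hmean : (a + m * x) / (m + 1) = x + d := by rw [hd]; field_simp; ring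
  have hpascal : ((m + 1).choose (k + 1) : ℝ) = m.choose k + m.choose (k + 1) := by
    exact_mod_cast Nat.choose_succ_succ' m k
  have habsorb : ((m : ℝ) + 1) * m.choose k = (m + 1).choose (k + 1) * (k + 1) := by
    exact_mod_cast Nat.add_one_mul_choose_eq m k
  have hmean_nonneg : 0 ≤ x + d := hmean ▸ by positivity
  have hbernoulli : x ^ (k + 1) + (k + 1 : ℕ) * x ^ k * d ≤ (x + d) ^ (k + 1) := by
    simpa using pow_add_mul_le_add_pow hx (by linarith) (k + 1)
  rw [hmean]
  calc (m.choose (k + 1) : ℝ) * x ^ (k + 1) + a * ((m.choose k : ℝ) * x ^ k)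
      = ((m + 1).choose (k + 1) : ℝ) * (x ^ (k + 1) + (k + 1 : ℕ) * x ^ k * d) := by
        rw [hd]
        field_simp
        push_cast
        linear_combination
          (-(x ^ (k + 1) * (m + 1))) * hpascal + (a * x ^ k - x ^ (k + 1)) * habsorb
    _ ≤ ((m + 1).choose (k + 1) : ℝ) * (x + d) ^ (k + 1) := by gcongr

namespace Multiset

theorem esymm_cons_succ {R : Type*} [CommSemiring R] (a : R) (s : Multiset R) (k : ℕ) :
    (a ::ₘ s).esymm (k + 1) = s.esymm (k + 1) + a * s.esymm k := by
  simp [esymm, powersetCard_cons, sum_map_mul_left]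

theorem esymm_le_choose_mul_pow (s : Multiset ℝ) (hs : ∀ x ∈ s, 0 ≤ x) (k : ℕ) :
    s.esymm k ≤ (card s).choose k * (s.sum / card s) ^ k := by
  induction s using Multiset.induction_on generalizing k with
  | empty => cases k <;> simp [esymm, powersetCard_zero_right]
  | cons a s ih =>
    cases k with
    | zero => simp [esymm]
    | succ k =>
      have ha : 0 ≤ a := hs a (mem_cons_self a s)
      have hs' : ∀ x ∈ s, 0 ≤ x := fun x hx => hs x (mem_cons_of_mem hx)
      have hsum : s.sum = card s * (s.sum / card s) := by
        rcases eq_or_ne (card s) 0 with h | h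
        · simp [card_eq_zero.mp h]
        · field_simp
      rw [esymm_cons_succ, card_cons, sum_cons, hsum]
      push_cast
      calc s.esymm (k + 1) + a * s.esymm k
          ≤ (card s).choose (k + 1) * (s.sum / card s) ^ (k + 1)
            + a * ((card s).choose k * (s.sum / card s) ^ k) :=
            add_le_add (ih hs' _) (mul_le_mul_of_nonneg_left (ih hs' _) ha)
        _ ≤ _ := choose_mul_pow_add_mul_choose_mul_pow_le _ _
            (div_nonneg (sum_nonneg hs') (Nat.cast_nonneg _)) ha

end Multiset

theorem Finset.sum_powersetCard_prod_le {ι : Type*} (A : Finset ι) {y : ι → ℝ}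
    (hy : ∀ j ∈ A, 0 ≤ y j) (k : ℕ) :
    ∑ S ∈ A.powersetCard k, ∏ j ∈ S, y j ≤ (#A).choose k * ((∑ j ∈ A, y j) / #A) ^ k := by
  have := (A.val.map y).esymm_le_choose_mul_pow (by simpa using hy) k
  simpa [Finset.esymm_map_val] using this

theorem sum_exp_mul_div_card_le {ι : Type*} [Fintype ι] [Nonempty ι] {ℓ : ι → ℝ} {a b : ℝ}
    (hℓ : ∀ j, ℓ j ∈ Set.Icc a b) (t : ℝ) :
    (∑ j, exp (t * ℓ j)) / Fintype.card ι
      ≤ exp (t * ((∑ j, ℓ j) / Fintype.card ι) + (b - a) ^ 2 * t ^ 2 / 8) := by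
  let _ : MeasurableSpace ι := ⊤
  set μ := (PMF.uniformOfFintype ι).toMeasure
  have hint : ∀ f : ι → ℝ, μ[f] = (∑ j, f j) / Fintype.card ι := fun f => by
    simp [μ, PMF.integral_eq_sum, Finset.mul_sum, div_eq_inv_mul]
  have hoeffding := (hasSubgaussianMGF_of_mem_Icc (μ := μ) (measurable_of_countable ℓ).aemeasurable
    (ae_of_all _ hℓ)).mgf_le t
  set m := (∑ j, ℓ j) / Fintype.card ι
  have hshift : ∑ j, exp (t * (ℓ j - m)) = exp (-(t * m)) * ∑ j, exp (t * ℓ j) := by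
    rw [mul_sum]
    congr with j
    rw [← exp_add]
    ring_nf
  have hparam : (((‖b - a‖₊ / 2) ^ 2 : ℝ≥0) : ℝ) = (b - a) ^ 2 / 4 := by
    push_cast
    rw [norm_eq_abs, div_pow, sq_abs]
    norm_num
  rw [mgf, hint, hint, hshift, hparam, mul_div_assoc] at hoeffding
  calc (∑ j, exp (t * ℓ j)) / Fintype.card ι
      = exp (t * m) * (exp (-(t * m)) * ((∑ j, exp (t * ℓ j)) / Fintype.card ι)) := by
        rw [← mul_assoc, ← exp_add, add_neg_cancel, exp_zero, one_mul]
    _ ≤ exp (t * m) * exp ((b - a) ^ 2 / 4 * t ^ 2 / 2) := by gcongr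
    _ = exp (t * m + (b - a) ^ 2 * t ^ 2 / 8) := by rw [← exp_add]; ring_nf

theorem Finset.card_mul_card_filter_mem_powersetCard {ι : Type*} {A : Finset ι} {j : ι}
    (hj : j ∈ A) (k : ℕ) : #A * #{S ∈ A.powersetCard k | j ∈ S} = k * (#A).choose k := by
  cases k with
  | zero => simp
  | succ k =>
    obtain ⟨m, hm⟩ : ∃ m, #A = m + 1 := Nat.exists_eq_add_one.mpr (card_pos.mpr ⟨j, hj⟩)
    simp_rw [← singleton_subset_iff]
    rw [card_filter_powersetCard_subset _ _ _ (singleton_subset_iff.mpr hj) (by simp), hm,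
      card_singleton, Nat.add_sub_cancel, Nat.add_sub_cancel, Nat.add_one_mul_choose_eq, mul_comm]

theorem Finset.card_mul_sum_powersetCard_sum {ι : Type*} (A : Finset ι) (f : ι → ℝ) (k : ℕ) :
    #A * ∑ S ∈ A.powersetCard k, ∑ j ∈ S, f j = k * (#A).choose k * ∑ j ∈ A, f j := by
  rw [sum_comm' (t' := A) (s' := fun j => {S ∈ A.powersetCard k | j ∈ S}), mul_sum, mul_sum]
  · refine sum_congr rfl fun j hj => ?_
    have hcount : (#A : ℝ) * #{S ∈ A.powersetCard k | j ∈ S} = k * (#A).choose k := by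
      exact_mod_cast card_mul_card_filter_mem_powersetCard hj k
    rw [sum_const, nsmul_eq_mul, ← mul_assoc, hcount]
  · intro S j
    simp only [mem_filter, mem_powersetCard]
    exact ⟨fun ⟨hS, hj⟩ => ⟨⟨hS, hj⟩, hS.1 hj⟩, And.left⟩

section SamplingWithoutReplacement

variable {ι : Type*} [Fintype ι] [Nonempty ι] {ℓ : ι → ℝ} {a b : ℝ}

theorem sum_powersetCard_exp_mul_sum_le (hℓ : ∀ j, ℓ j ∈ Set.Icc a b) (t : ℝ) (k : ℕ) :
    ∑ S ∈ powersetCard k univ, exp (t * ∑ j ∈ S, ℓ j)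
      ≤ (Fintype.card ι).choose k
          * exp (t * ((∑ j, ℓ j) / Fintype.card ι) + (b - a) ^ 2 * t ^ 2 / 8) ^ k := by
  simp_rw [mul_sum, exp_sum]
  calc ∑ S ∈ powersetCard k univ, ∏ j ∈ S, exp (t * ℓ j)
      ≤ (Fintype.card ι).choose k * ((∑ j, exp (t * ℓ j)) / Fintype.card ι) ^ k := by
        simpa using sum_powersetCard_prod_le univ (fun j _ => (exp_pos (t * ℓ j)).le) k
    _ ≤ _ := by gcongr; exact sum_exp_mul_div_card_le hℓ t

theorem card_upper_tail_le_of_nonneg (hℓ : ∀ j, ℓ j ∈ Set.Icc a b) (k : ℕ) (γ : ℝ) {t : ℝ}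
    (ht : 0 ≤ t) :
    (#{S ∈ powersetCard k univ | k * ((∑ j, ℓ j) / Fintype.card ι + γ) ≤ ∑ j ∈ S, ℓ j} : ℝ)
      ≤ (Fintype.card ι).choose k * exp (k * ((b - a) ^ 2 * t ^ 2 / 8 - t * γ)) := by
  set m := (∑ j, ℓ j) / Fintype.card ι
  calc (#{S ∈ powersetCard k univ | k * (m + γ) ≤ ∑ j ∈ S, ℓ j} : ℝ)
      ≤ ∑ S ∈ powersetCard k univ with k * (m + γ) ≤ ∑ j ∈ S, ℓ j,
          exp (t * (∑ j ∈ S, ℓ j - k * (m + γ))) := by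
        rw [card_eq_sum_ones, Nat.cast_sum, Nat.cast_one]
        refine sum_le_sum fun S hS => one_le_exp (mul_nonneg ht ?_)
        linarith [(mem_filter.mp hS).2]
    _ ≤ ∑ S ∈ powersetCard k univ, exp (t * (∑ j ∈ S, ℓ j - k * (m + γ))) :=
        sum_le_sum_of_subset_of_nonneg (filter_subset _ _) fun S _ _ => (exp_pos _).le
    _ = exp (-(t * k * (m + γ))) * ∑ S ∈ powersetCard k univ, exp (t * ∑ j ∈ S, ℓ j) := by
        rw [mul_sum]
        congr with S
        rw [← exp_add]
        ring_nf
    _ ≤ exp (-(t * k * (m + γ)))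
          * ((Fintype.card ι).choose k * exp (t * m + (b - a) ^ 2 * t ^ 2 / 8) ^ k) := by
        gcongr
        exact sum_powersetCard_exp_mul_sum_le hℓ t k
    _ = (Fintype.card ι).choose k * exp (k * ((b - a) ^ 2 * t ^ 2 / 8 - t * γ)) := by
        rw [← exp_nat_mul, mul_left_comm, ← exp_add]
        ring_nf

theorem card_upper_tail_le (hℓ : ∀ j, ℓ j ∈ Set.Icc a b) (k : ℕ) {γ : ℝ} (hγ : 0 ≤ γ) :
    (#{S ∈ powersetCard k univ | k * ((∑ j, ℓ j) / Fintype.card ι + γ) ≤ ∑ j ∈ S, ℓ j} : ℝ)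
      ≤ (Fintype.card ι).choose k * exp (-(2 * k * γ ^ 2 / (b - a) ^ 2)) := by
  rcases eq_or_ne (b - a) 0 with hab | hab
  · rw [hab]
    simpa using card_filter_le (powersetCard k univ) _
  · convert card_upper_tail_le_of_nonneg hℓ k γ (by positivity : 0 ≤ 4 * γ / (b - a) ^ 2) using 3
    field_simp
    ring

theorem card_abs_tail_le (hℓ : ∀ j, ℓ j ∈ Set.Icc a b) (k : ℕ) {γ : ℝ} (hγ : 0 ≤ γ) :
    (#{S ∈ powersetCard k univ |
        k * γ ≤ |∑ j ∈ S, ℓ j - k * ((∑ j, ℓ j) / Fintype.card ι)|} : ℝ)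
      ≤ 2 * (Fintype.card ι).choose k * exp (-(2 * k * γ ^ 2 / (b - a) ^ 2)) := by
  have hneg : ∀ j, -ℓ j ∈ Set.Icc (-b) (-a) := fun j => ⟨neg_le_neg (hℓ j).2, neg_le_neg (hℓ j).1⟩
  have hupper := card_upper_tail_le hℓ k hγ
  have hlower := card_upper_tail_le hneg k hγ
  rw [show -a - -b = b - a by ring] at hlower
  set m := (∑ j, ℓ j) / Fintype.card ι
  set 𝒮 := powersetCard k (univ : Finset ι)
  have hsplit : {S ∈ 𝒮 | k * γ ≤ |∑ j ∈ S, ℓ j - k * m|}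
      ⊆ {S ∈ 𝒮 | k * (m + γ) ≤ ∑ j ∈ S, ℓ j}
        ∪ {S ∈ 𝒮 | k * ((∑ j, -ℓ j) / Fintype.card ι + γ) ≤ ∑ j ∈ S, -ℓ j} := by
    intro S hS
    rw [mem_filter] at hS
    simp only [mem_union, mem_filter, sum_neg_distrib, neg_div]
    rcases le_abs'.mp hS.2 with h | h
    · right; exact ⟨hS.1, by linarith⟩
    · left; exact ⟨hS.1, by linarith⟩
  have hunion := (card_le_card hsplit).trans (card_union_le _ _)
  calc _ ≤ (#{S ∈ 𝒮 | k * (m + γ) ≤ ∑ j ∈ S, ℓ j} : ℝ)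
        + #{S ∈ 𝒮 | k * ((∑ j, -ℓ j) / Fintype.card ι + γ) ≤ ∑ j ∈ S, -ℓ j} := by
        exact_mod_cast hunion
    _ ≤ _ := by linarith

end SamplingWithoutReplacement

theorem two_mul_exp_le_of_threshold_le {N k α γ b : ℝ} (hα : 0 < α) (hγ : 0 < γ) (hb : b ≠ 0)
    (hk : 0 < k) (hkN : k ≤ N) (hthr : √N * √(-log (α / 2) * b ^ 2 / (2 * γ ^ 2)) ≤ k) :
    2 * exp (-(2 * k * γ ^ 2 / b ^ 2)) ≤ α := by
  set D := -log (α / 2) * b ^ 2 / (2 * γ ^ 2)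
  have hsqrt : √D * √k ≤ √k * √k :=
    calc √D * √k ≤ √D * √N := by gcongr
      _ ≤ k := by rw [mul_comm]; exact hthr
      _ = √k * √k := (mul_self_sqrt hk.le).symm
  have hDk : D ≤ k :=
    (sqrt_le_sqrt_iff hk.le).mp (le_of_mul_le_mul_right hsqrt (sqrt_pos.mpr hk))
  have hexponent : -(2 * k * γ ^ 2 / b ^ 2) ≤ log (α / 2) := by
    rw [div_le_iff₀ (by positivity)] at hDk
    rw [neg_le, le_div_iff₀ (by positivity)]
    linarith
  calc 2 * exp (-(2 * k * γ ^ 2 / b ^ 2)) ≤ 2 * exp (log (α / 2)) := by gcongr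
    _ = α := by rw [exp_log (by positivity)]; ring

theorem fastgae_threshold_guarantees_confidence_general
    (n : ℕ) (hn : 1 ≤ n)
    (ε : ℝ) (hε0 : 0 < ε) (hε1 : ε < 1)
    (α : ℝ) (hα0 : 0 < α)
    (γ : ℝ) (hγ : 0 < γ)
    (ℓ : Fin n → ℝ) (hℓ : ∀ j, 0 ≤ ℓ j ∧ ℓ j ≤ -Real.log ε)
    (nS : ℕ) (h1 : 1 ≤ nS) (h2 : nS ≤ n)
    (hthr : (nS : ℝ) ≥ Real.sqrt (n : ℝ) *
        Real.sqrt ((-Real.log (α / 2)) * (Real.log ε) ^ 2 / (2 * γ ^ 2))) :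
    let 𝒮 := Finset.powersetCard nS (Finset.univ : Finset (Fin n))
    let Lv : Finset (Fin n) → ℝ := fun s => (1 / (nS : ℝ)) * ∑ j ∈ s, ℓ j
    let EL : ℝ := (∑ s ∈ 𝒮, Lv s) / (𝒮.card : ℝ)
    ((𝒮.filter fun s => γ ≤ |Lv s - EL|).card : ℝ) / (𝒮.card : ℝ) ≤ α := by
  intro 𝒮 Lv EL
  have : NeZero n := ⟨by omega⟩
  have hnS : (0 : ℝ) < nS := by exact_mod_cast h1
  have hcard : (#𝒮 : ℝ) = n.choose nS := by simp [𝒮]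
  have hchoose : (0 : ℝ) < n.choose nS := by exact_mod_cast Nat.choose_pos h2
  have hEL : EL = (∑ j, ℓ j) / n := by
    have hcount := card_mul_sum_powersetCard_sum (univ : Finset (Fin n)) ℓ nS
    simp only [card_univ, Fintype.card_fin] at hcount
    simp only [EL, Lv, ← mul_sum, hcard]
    field_simp
    linear_combination hcount
  have htail := card_abs_tail_le (a := 0) (fun j => hℓ j) nS hγ.le
  simp only [Fintype.card_fin, sub_zero, neg_sq] at htail
  have hsub : 𝒮.filter (fun s => γ ≤ |Lv s - EL|)
      ⊆ {S ∈ 𝒮 | nS * γ ≤ |∑ j ∈ S, ℓ j - nS * ((∑ j, ℓ j) / n)|} := by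
    intro S hS
    rw [mem_filter] at hS ⊢
    refine ⟨hS.1, ?_⟩
    have hscale : ∑ j ∈ S, ℓ j - nS * EL = nS * (Lv S - EL) := by
      simp only [Lv]; field_simp
    rw [← hEL, hscale, abs_mul, abs_of_pos hnS]
    exact mul_le_mul_of_nonneg_left hS.2 hnS.le
  have hconf := two_mul_exp_le_of_threshold_le hα0 hγ (log_neg hε0 hε1).ne hnS
    (by exact_mod_cast h2) hthr
  rw [div_le_iff₀ (hcard ▸ hchoose)]
  calc (#(𝒮.filter fun s => γ ≤ |Lv s - EL|) : ℝ)
      ≤ #{S ∈ 𝒮 | nS * γ ≤ |∑ j ∈ S, ℓ j - nS * ((∑ j, ℓ j) / n)|} := by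
        exact_mod_cast card_le_card hsub
    _ ≤ 2 * n.choose nS * exp (-(2 * nS * γ ^ 2 / log ε ^ 2)) := htail
    _ ≤ α * #𝒮 := by
        rw [hcard, mul_right_comm]
        exact mul_le_mul_of_nonneg_right hconf hchoose.le

theorem fastgae_threshold_guarantees_confidence
    (n : ℕ) (hn : 1 ≤ n)
    (ε : ℝ) (hε0 : 0 < ε) (hε1 : ε < 1)
    (α : ℝ) (hα0 : 0 < α) (hα1 : α < 1)
    (γ : ℝ) (hγ : 0 < γ)
    (ℓ : Fin n → ℝ) (hℓ : ∀ j, 0 ≤ ℓ j ∧ ℓ j ≤ -Real.log ε)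
    (nS : ℕ) (h1 : 1 ≤ nS) (h2 : nS ≤ n)
    (hthr : (nS : ℝ) ≥ Real.sqrt (n : ℝ) *
        Real.sqrt ((-Real.log (α / 2)) * (Real.log ε) ^ 2 / (2 * γ ^ 2))) :
    let 𝒮 := Finset.powersetCard nS (Finset.univ : Finset (Fin n))
    let Lv : Finset (Fin n) → ℝ := fun s => (1 / (nS : ℝ)) * ∑ j ∈ s, ℓ j
    let EL : ℝ := (∑ s ∈ 𝒮, Lv s) / (𝒮.card : ℝ)
    ((𝒮.filter fun s => γ ≤ |Lv s - EL|).card : ℝ) / (𝒮.card : ℝ) ≤ α :=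
  fastgae_threshold_guarantees_confidence_general n hn ε hε0 hε1 α hα0 γ hγ ℓ hℓ nS h1 h2 hthr
end

section
/- Let n ≥ 1 be an integer, 0 < α < 1 and γ > 0 real parameters, and let ℓ : Fin n → ℝ satisfy 0 ≤ ℓ j ≤ 1 for every j. Let n_S be an integer with 1 ≤ n_S ≤ n and n_S ≥ √n · √((−log(α/2)) / (2 γ²)). Let S be a uniformly random n_S-element subset of Fin n (uniform distribution over all subsets of cardinality n_S) and define L = (1/n_S) Σ_{j ∈ S} ℓ j. Then P(|L − E[L]| ≥ γ) ≤ α. -/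
/-!
Hoeffding's bound for sampling without replacement, in the weak form that the fluctuation of a
sum over a uniform random `k`-subset of an `n`-element population with values in `[0, 1]` is
sub-Gaussian with variance proxy `n / 4`. This is proved by induction on the population: adding
an element `a` splits the `k`-subsets into those avoiding `a` (proportion `1 - p`, `p = k/(n+1)`)
and those containing it, and the resulting two-point average of exponentials is controlled by
Hoeffding's lemma. A Chernoff bound with `t = 4ε/n` then bounds the proportion of subsets whose
sum deviates by at least `ε = k γ` by `2 exp (-2 k² γ² / n)`, which the threshold on `k` makes
at most `α`.
-/

open Real Finset MeasureTheory ProbabilityTheory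
open scoped BigOperators

lemma exp_two_point_le {p : ℝ} (hp0 : 0 ≤ p) (hp1 : p ≤ 1) (u : ℝ) :
    (1 - p) * exp (-(p * u)) + p * exp ((1 - p) * u) ≤ exp (u ^ 2 / 8) := by
  let μ : Measure ℝ := bernoulliMeasure (1 - p) (-p) ⟨p, hp0, hp1⟩
  have hbound : ∀ᵐ z ∂μ, z ∈ Set.Icc (-p) (1 - p) := by
    refine ae_add_measure_iff.2 ⟨Measure.ae_smul_measure ?_ _, Measure.ae_smul_measure ?_ _⟩ <;>
      exact (ae_dirac_iff measurableSet_Icc).2 (by simp)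
  have hcentered : μ[id] = 0 := by
    simp only [μ, integral_bernoulliMeasure, id, smul_eq_mul]
    ring
  have hmgf :=
    (hasSubgaussianMGF_of_mem_Icc_of_integral_eq_zero aemeasurable_id hbound hcentered).mgf_le u
  simp only [mgf, μ, integral_bernoulliMeasure] at hmgf
  convert hmgf using 1
  · simp only [id, smul_eq_mul]
    ring_nf
  · norm_num
    ring_nf

lemma Nat.cast_choose_succ_succ_mul_div (n m : ℕ) :
    ((n + 1).choose (m + 1) : ℝ) * ((m + 1) / (n + 1)) = n.choose m := by
  field_simp
  exact_mod_cast (Nat.add_one_mul_choose_eq n m).symm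

lemma Nat.choose_mul_exp_add_choose_mul_exp_le {n m : ℕ} (hm : m ≤ n) {v t : ℝ}
    (hv : v ^ 2 ≤ t ^ 2) :
    n.choose (m + 1) * exp (-((m + 1) / (n + 1) * v))
        + n.choose m * exp ((1 - (m + 1) / (n + 1)) * v)
      ≤ (n + 1).choose (m + 1) * exp (t ^ 2 / 8) := by
  set p : ℝ := (m + 1) / (n + 1)
  set C : ℝ := ((n + 1).choose (m + 1) : ℝ)
  have hp : p ∈ Set.Icc 0 1 :=
    ⟨by positivity, div_le_one_of_le₀ (by norm_cast; omega) (by positivity)⟩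
  have hCp : C * p = n.choose m := Nat.cast_choose_succ_succ_mul_div n m
  have hCq : C * (1 - p) = n.choose (m + 1) := by
    rw [mul_one_sub, hCp, sub_eq_iff_eq_add', ← Nat.cast_add, ← Nat.choose_succ_succ']
  calc _ = C * ((1 - p) * exp (-(p * v)) + p * exp ((1 - p) * v)) := by
        rw [← hCp, ← hCq]
        ring
    _ ≤ C * exp (v ^ 2 / 8) := by gcongr; exact exp_two_point_le hp.1 hp.2 v
    _ ≤ C * exp (t ^ 2 / 8) := by gcongr

namespace Finset

variable {ι : Type*} [DecidableEq ι]

lemma sum_powersetCard_succ_insert {M : Type*} [AddCommMonoid M] {a : ι} {u : Finset ι}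
    (ha : a ∉ u) (m : ℕ) (f : Finset ι → M) :
    ∑ s ∈ (insert a u).powersetCard (m + 1), f s =
      ∑ s ∈ u.powersetCard (m + 1), f s + ∑ s ∈ u.powersetCard m, f (insert a s) := by
  rw [powersetCard_succ_insert ha, sum_union, sum_image]
  · exact insert_erase_invOn.2.injOn.mono fun s hs ↦ notMem_mono (mem_powersetCard.1 hs).1 ha
  · simp only [disjoint_left, mem_powersetCard, mem_image]
    rintro _ ⟨hs, -⟩ ⟨s, -, rfl⟩
    exact ha (hs (mem_insert_self a s))

lemma sum_powersetCard_sum {M : Type*} [AddCommMonoid M] (u : Finset ι) (m : ℕ) (f : ι → M) :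
    ∑ s ∈ u.powersetCard (m + 1), ∑ j ∈ s, f j = (#u - 1).choose m • ∑ j ∈ u, f j := by
  rw [sum_comm' (t' := u) (s' := fun j ↦ (u.powersetCard (m + 1)).filter (j ∈ ·)), smul_sum]
  · refine sum_congr rfl fun j hj ↦ ?_
    have hcount := card_filter_powersetCard_subset {j} u (m + 1) (by simpa) (by simp)
    simp only [singleton_subset_iff, card_singleton, add_tsub_cancel_right] at hcount
    rw [sum_const, hcount]
  · intro s j
    simp only [mem_powersetCard, mem_filter]
    exact ⟨fun h ↦ ⟨h, h.1.1 h.2⟩, And.left⟩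

section Field

variable {K : Type*} [Field K] [CharZero K]

lemma expect_powersetCard_sum {u : Finset ι} {k : ℕ} (hk : k ≤ #u) (f : ι → K) :
    𝔼 s ∈ u.powersetCard k, ∑ j ∈ s, f j = k * 𝔼 j ∈ u, f j := by
  rcases k with _ | m
  · simp
  rw [expect_eq_sum_div_card, expect_eq_sum_div_card, sum_powersetCard_sum, card_powersetCard,
    nsmul_eq_mul]
  have hchoose := Nat.add_one_mul_choose_eq (#u - 1) m
  rw [Nat.sub_add_cancel (by omega)] at hchoose
  have hchooseK : (#u : K) * (#u - 1).choose m = (#u).choose (m + 1) * (m + 1 : ℕ) := by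
    exact_mod_cast hchoose
  have hchoose_ne : ((#u).choose (m + 1) : K) ≠ 0 := by exact_mod_cast (Nat.choose_pos hk).ne'
  have hcard_ne : (#u : K) ≠ 0 := by exact_mod_cast (by omega : #u ≠ 0)
  field_simp
  linear_combination (∑ j ∈ u, f j) * hchooseK

lemma expect_insert_of_notMem {a : ι} {u : Finset ι} (ha : a ∉ u) (f : ι → K) :
    𝔼 j ∈ insert a u, f j = 𝔼 j ∈ u, f j + (f a - 𝔼 j ∈ u, f j) / (#u + 1) := by
  rw [expect_eq_sum_div_card, sum_insert ha, card_insert_of_notMem ha, ← card_mul_expect]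
  field_simp
  push_cast
  ring

end Field

variable {x : ι → ℝ}

lemma sum_powersetCard_succ_insert_exp_le {a : ι} {u : Finset ι} (ha : a ∉ u)
    (hxa : x a ∈ Set.Icc 0 1) (hmean : 𝔼 j ∈ u, x j ∈ Set.Icc 0 1) {m : ℕ} (hm : m ≤ #u)
    (t : ℝ) (ih : ∀ k : ℕ, ∑ s ∈ u.powersetCard k, exp (t * (∑ j ∈ s, x j - k * 𝔼 j ∈ u, x j))
      ≤ (#u).choose k * exp (#u * t ^ 2 / 8)) :
    ∑ s ∈ (insert a u).powersetCard (m + 1),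
        exp (t * (∑ j ∈ s, x j - ↑(m + 1) * 𝔼 j ∈ insert a u, x j))
      ≤ (#u + 1).choose (m + 1) * exp (↑(#u + 1) * t ^ 2 / 8) := by
  set n := #u
  set μ := 𝔼 j ∈ u, x j
  set d := x a - μ
  set p : ℝ := (m + 1) / (n + 1)
  have hd : (t * d) ^ 2 ≤ t ^ 2 := by
    rw [mul_pow]
    refine mul_le_of_le_one_right (sq_nonneg t) ?_
    rw [sq_le_one_iff_abs_le_one, abs_le]
    constructor <;> linarith [hxa.1, hxa.2, hmean.1, hmean.2]
  -- Shifting the mean by `d / (n + 1)` tilts the two halves of the sum by `-p` and `1 - p`.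
  have hout : ∀ s ∈ u.powersetCard (m + 1),
      exp (t * (∑ j ∈ s, x j - ↑(m + 1) * (μ + d / (n + 1))))
        = exp (-(p * (t * d))) * exp (t * (∑ j ∈ s, x j - ↑(m + 1) * μ)) := by
    intro s _
    rw [← exp_add]
    congr 1
    push_cast
    ring
  have hin : ∀ s ∈ u.powersetCard m,
      exp (t * (∑ j ∈ insert a s, x j - ↑(m + 1) * (μ + d / (n + 1))))
        = exp ((1 - p) * (t * d)) * exp (t * (∑ j ∈ s, x j - m * μ)) := by
    intro s hs
    rw [sum_insert fun has ↦ ha ((mem_powersetCard.1 hs).1 has), ← exp_add]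
    congr 1
    simp only [d, p]
    field_simp
    push_cast
    ring
  rw [sum_powersetCard_succ_insert ha, expect_insert_of_notMem ha, sum_congr rfl hout,
    sum_congr rfl hin, ← mul_sum, ← mul_sum]
  calc _ ≤ exp (-(p * (t * d))) * (n.choose (m + 1) * exp (n * t ^ 2 / 8))
        + exp ((1 - p) * (t * d)) * (n.choose m * exp (n * t ^ 2 / 8)) := by
        gcongr <;> exact ih _
    _ = (n.choose (m + 1) * exp (-(p * (t * d))) + n.choose m * exp ((1 - p) * (t * d)))
        * exp (n * t ^ 2 / 8) := by ring
    _ ≤ (n + 1).choose (m + 1) * exp (t ^ 2 / 8) * exp (n * t ^ 2 / 8) := by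
        gcongr
        exact Nat.choose_mul_exp_add_choose_mul_exp_le hm hd
    _ = (n + 1).choose (m + 1) * exp (↑(n + 1) * t ^ 2 / 8) := by
        rw [mul_assoc, ← exp_add]
        push_cast
        ring_nf

theorem sum_powersetCard_exp_le {u : Finset ι} (hx : ∀ i ∈ u, x i ∈ Set.Icc 0 1) (k : ℕ)
    (t : ℝ) :
    ∑ s ∈ u.powersetCard k, exp (t * (∑ j ∈ s, x j - k * 𝔼 j ∈ u, x j))
      ≤ (#u).choose k * exp (#u * t ^ 2 / 8) := by
  induction u using Finset.induction_on generalizing k with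
  | empty =>
    rcases k with _ | k
    · simp
    · rw [powersetCard_eq_empty.2 (by simp)]
      simp
  | @insert a u ha ih =>
    obtain ⟨hxa, hxu⟩ : x a ∈ Set.Icc 0 1 ∧ ∀ i ∈ u, x i ∈ Set.Icc 0 1 := by simpa using hx
    have hmean : 𝔼 j ∈ u, x j ∈ Set.Icc 0 1 := by
      refine ⟨expect_nonneg fun i hi ↦ (hxu i hi).1, ?_⟩
      rcases u.eq_empty_or_nonempty with hu | hu
      · simp [hu]
      · exact expect_le hu fun i hi ↦ (hxu i hi).2
    rw [card_insert_of_notMem ha]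
    rcases k with _ | m
    · simpa using one_le_exp (by positivity)
    by_cases hm : m ≤ #u
    · exact sum_powersetCard_succ_insert_exp_le ha hxa hmean hm t (ih hxu)
    · rw [powersetCard_eq_empty.2 (by rw [card_insert_of_notMem ha]; omega), sum_empty]
      positivity

lemma card_filter_le_abs_mul_exp_le {α : Type*} (𝒮 : Finset α) (D : α → ℝ) {t : ℝ}
    (ht : 0 ≤ t) (ε : ℝ) :
    #{s ∈ 𝒮 | ε ≤ |D s|} * exp (t * ε) ≤ ∑ s ∈ 𝒮, (exp (t * D s) + exp (-t * D s)) := by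
  have hpoint : ∀ s ∈ 𝒮.filter (ε ≤ |D ·|), exp (t * ε) ≤ exp (t * D s) + exp (-t * D s) := by
    intro s hs
    have hε := (mem_filter.1 hs).2
    rcases le_abs'.1 hε with hneg | hpos
    · have hexp : exp (t * ε) ≤ exp (-t * D s) := exp_le_exp.2 (by nlinarith)
      linarith [exp_pos (t * D s)]
    · have hexp : exp (t * ε) ≤ exp (t * D s) := exp_le_exp.2 (by nlinarith)
      linarith [exp_pos (-t * D s)]
  calc (#{s ∈ 𝒮 | ε ≤ |D s|} : ℝ) * exp (t * ε) = ∑ s ∈ 𝒮.filter (ε ≤ |D ·|), exp (t * ε) := by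
        rw [sum_const, nsmul_eq_mul]
    _ ≤ ∑ s ∈ 𝒮.filter (ε ≤ |D ·|), (exp (t * D s) + exp (-t * D s)) := sum_le_sum hpoint
    _ ≤ ∑ s ∈ 𝒮, (exp (t * D s) + exp (-t * D s)) :=
        sum_le_sum_of_subset_of_nonneg (filter_subset _ _) fun _ _ _ ↦ by positivity

theorem card_filter_le_abs_sum_sub_le {u : Finset ι} (hx : ∀ i ∈ u, x i ∈ Set.Icc 0 1) (k : ℕ)
    {ε : ℝ} (hε : 0 ≤ ε) :
    (#{s ∈ u.powersetCard k | ε ≤ |∑ j ∈ s, x j - k * 𝔼 j ∈ u, x j|} : ℝ)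
      ≤ 2 * (#u).choose k * exp (-(2 * ε ^ 2 / #u)) := by
  set t := 4 * ε / #u
  have hmarkov := card_filter_le_abs_mul_exp_le (u.powersetCard k)
    (fun s ↦ ∑ j ∈ s, x j - k * 𝔼 j ∈ u, x j) (by positivity : 0 ≤ t) ε
  rw [sum_add_distrib, ← le_div_iff₀ (exp_pos _), div_eq_mul_inv, ← exp_neg] at hmarkov
  have hup := sum_powersetCard_exp_le hx k t
  have hdown := sum_powersetCard_exp_le hx k (-t)
  rw [neg_sq] at hdown
  calc _ ≤ _ := hmarkov
    _ ≤ (2 * (#u).choose k * exp (#u * t ^ 2 / 8)) * exp (-(t * ε)) := by gcongr; linarith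
    _ = 2 * (#u).choose k * exp (-(2 * ε ^ 2 / #u)) := by
        rw [mul_assoc, ← exp_add]
        congr 2
        rcases eq_or_ne (#u : ℝ) 0 with hu | hu
        · simp [t, hu]
        · simp only [t]
          field_simp
          ring

end Finset

lemma exp_neg_two_mul_sq_div_le_half {n k α γ : ℝ} (hn : 0 < n) (hα : 0 < α) (hγ : γ ≠ 0)
    (hk : √n * √(-log (α / 2) / (2 * γ ^ 2)) ≤ k) :
    exp (-(2 * (k * γ) ^ 2 / n)) ≤ α / 2 := by
  rw [← sqrt_mul hn.le, sqrt_le_iff] at hk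
  have hlog : -log (α / 2) ≤ 2 * (k * γ) ^ 2 / n := by
    have hk2 := hk.2
    rw [mul_div_assoc', div_le_iff₀ (by positivity)] at hk2
    rw [le_div_iff₀ hn]
    linear_combination hk2
  calc exp (-(2 * (k * γ) ^ 2 / n)) ≤ exp (log (α / 2)) := exp_le_exp.2 (by linarith)
    _ = α / 2 := exp_log (by positivity)

open scoped Classical

theorem fastgae_threshold_guarantees_confidence_frobenius_general
    (n : ℕ) (hn : 1 ≤ n)
    (α : ℝ) (hα0 : 0 < α)
    (γ : ℝ) (hγ : 0 < γ)
    (ℓ : Fin n → ℝ) (hℓ : ∀ j, 0 ≤ ℓ j ∧ ℓ j ≤ 1)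
    (nS : ℕ) (h1 : 1 ≤ nS) (h2 : nS ≤ n)
    (hthr : (nS : ℝ) ≥ Real.sqrt (n : ℝ) *
        Real.sqrt ((-Real.log (α / 2)) / (2 * γ ^ 2))) :
    let 𝒮 := Finset.powersetCard nS (Finset.univ : Finset (Fin n))
    let Lv : Finset (Fin n) → ℝ := fun s => (1 / (nS : ℝ)) * ∑ j ∈ s, ℓ j
    let EL : ℝ := (∑ s ∈ 𝒮, Lv s) / (𝒮.card : ℝ)
    ((𝒮.filter fun s => γ ≤ |Lv s - EL|).card : ℝ) / (𝒮.card : ℝ) ≤ α := by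
  intro 𝒮 Lv EL
  have hnS : (0 : ℝ) < nS := by exact_mod_cast h1
  have hEL : EL = 𝔼 j, ℓ j := by
    simp only [EL, Lv, 𝒮, ← expect_eq_sum_div_card, ← mul_expect]
    rw [expect_powersetCard_sum (by simpa using h2)]
    field_simp
  have hevent : 𝒮.filter (fun s ↦ γ ≤ |Lv s - EL|)
      = 𝒮.filter (fun s ↦ nS * γ ≤ |∑ j ∈ s, ℓ j - nS * 𝔼 j, ℓ j|) := by
    refine filter_congr fun s _ ↦ ?_
    rw [hEL, show Lv s - 𝔼 j, ℓ j = (∑ j ∈ s, ℓ j - nS * 𝔼 j, ℓ j) / nS by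
      simp only [Lv]; field_simp, abs_div, abs_of_pos hnS, le_div_iff₀' hnS]
  have htail := card_filter_le_abs_sum_sub_le (u := univ) (fun i _ ↦ hℓ i) nS
    (by positivity : 0 ≤ nS * γ)
  have hexp := exp_neg_two_mul_sq_div_le_half (by exact_mod_cast hn) hα0 hγ.ne' hthr
  rw [card_univ, Fintype.card_fin] at htail
  refine div_le_of_le_mul₀ (Nat.cast_nonneg _) hα0.le ?_
  rw [hevent, card_powersetCard, card_univ, Fintype.card_fin]
  calc _ ≤ 2 * (n.choose nS : ℝ) * exp (-(2 * (nS * γ) ^ 2 / n)) := htail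
    _ ≤ 2 * n.choose nS * (α / 2) := by gcongr
    _ = α * n.choose nS := by ring

theorem fastgae_threshold_guarantees_confidence_frobenius
    (n : ℕ) (hn : 1 ≤ n)
    (α : ℝ) (hα0 : 0 < α) (hα1 : α < 1)
    (γ : ℝ) (hγ : 0 < γ)
    (ℓ : Fin n → ℝ) (hℓ : ∀ j, 0 ≤ ℓ j ∧ ℓ j ≤ 1)
    (nS : ℕ) (h1 : 1 ≤ nS) (h2 : nS ≤ n)
    (hthr : (nS : ℝ) ≥ Real.sqrt (n : ℝ) *
        Real.sqrt ((-Real.log (α / 2)) / (2 * γ ^ 2))) :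
    let 𝒮 := Finset.powersetCard nS (Finset.univ : Finset (Fin n))
    let Lv : Finset (Fin n) → ℝ := fun s => (1 / (nS : ℝ)) * ∑ j ∈ s, ℓ j
    let EL : ℝ := (∑ s ∈ 𝒮, Lv s) / (𝒮.card : ℝ)
    ((𝒮.filter fun s => γ ≤ |Lv s - EL|).card : ℝ) / (𝒮.card : ℝ) ≤ α :=
  fastgae_threshold_guarantees_confidence_frobenius_general n hn α hα0 γ hγ ℓ hℓ nS h1 h2 hthr
end

section
/- Let V be a finite set with probability weights p : V → ℝ (p i ≥ 0 for all i and Σ_{i∈V} p i = 1), let μ be the probability measure on V with μ({i}) = p i, let n_S ≥ 1, and let L : V × V → ℝ be any fixed real-valued function. Under the product measure μ^{⊗ n_S} on functions f : Fin n_S → V (modeling n_S independent draws with replacement, with sampled node set V_S = range f), the expectation of the random variable f ↦ (1/n_S²) Σ_{(i,j)∈V×V} 1_{(i ∈ range f ∧ j ∈ range f)} · L(i,j) equals (1/n_S²) · [ Σ_{i ∈ V} (1 − (1 − p i)^{n_S}) · L(i,i) + Σ_{(i,j)∈V×V, i ≠ j} (1 − (1 − p i)^{n_S} − (1 − p j)^{n_S}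 + (1 − p i − p j)^{n_S}) · L(i,j) ]. -/
/-!
A node is missed by all `n` independent draws with probability `(1 - pᵢ)ⁿ`, and two distinct
nodes are both missed with probability `(1 - pᵢ - pⱼ)ⁿ`. By inclusion–exclusion on the complements,
`P(i ∈ V_S ∧ j ∈ V_S) = 1 - (1 - pᵢ)ⁿ - (1 - pⱼ)ⁿ + (1 - pᵢ - pⱼ)ⁿ` for `i ≠ j`, while on the
diagonal the event is just `i ∈ V_S`. Linearity of expectation then gives the loss.
-/

open MeasureTheory

theorem probReal_inter_eq_one_sub_compl {Ω : Type*} [MeasurableSpace Ω] (ν : Measure Ω)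
    [IsProbabilityMeasure ν] {A B : Set Ω} (hA : MeasurableSet A) (hB : MeasurableSet B) :
    ν.real (A ∩ B) = 1 - ν.real Aᶜ - ν.real Bᶜ + ν.real (Aᶜ ∩ Bᶜ) := by
  have h := measureReal_union_add_inter (μ := ν) (s := Aᶜ) hB.compl
  rw [← Set.compl_inter, probReal_compl_eq_one_sub (hA.inter hB)] at h
  linarith

theorem integral_sum_ite_mul {Ω β : Type*} [MeasurableSpace Ω] (ν : Measure Ω)
    [IsFiniteMeasure ν] [Fintype β] {P : β → Ω → Prop} [∀ b, DecidablePred (P b)]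
    (hP : ∀ b, MeasurableSet {x | P b x}) (c : β → ℝ) :
    ∫ x, ∑ b, (if P b x then (1 : ℝ) else 0) * c b ∂ν = ∑ b, ν.real {x | P b x} * c b := by
  have hind : ∀ b, (fun x => (if P b x then (1 : ℝ) else 0) * c b)
      = {x | P b x}.indicator fun _ => c b := fun b => by
    ext x; simp [Set.indicator_apply]
  rw [integral_finsetSum _ fun b _ => by
    rw [hind b]; exact (integrable_const _).indicator (hP b)]
  refine Finset.sum_congr rfl fun b _ => ?_
  rw [hind b, integral_indicator_const _ (hP b), smul_eq_mul]

theorem Fintype.sum_prod_eq_sum_diag_add_sum_ne {β M : Type*} [Fintype β] [DecidableEq β]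
    [AddCommMonoid M] (g : β × β → M) :
    ∑ ij, g ij
      = ∑ i, g (i, i) + ∑ ij ∈ Finset.univ.filter (fun ij : β × β => ij.1 ≠ ij.2), g ij := by
  rw [← Finset.sum_filter_add_sum_filter_not Finset.univ fun ij : β × β => ij.1 = ij.2,
    ← Finset.univ_product_univ, ← Finset.diag_eq_filter, Finset.sum_diag]

theorem compl_setOf_mem_range {ι α : Type*} (a : α) :
    {f : ι → α | a ∈ Set.range f}ᶜ = {f | Set.range f ⊆ {a}ᶜ} := by
  ext f; simp

section SamplingWithReplacement

variable {ι α : Type*} [Fintype ι] [MeasurableSpace α]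

theorem measurableSet_mem_range [MeasurableSingletonClass α] (a : α) :
    MeasurableSet {f : ι → α | a ∈ Set.range f} := by
  simp only [Set.mem_range, Set.ofPred_exists]
  exact .iUnion fun k => (measurableSet_singleton a).preimage (measurable_pi_apply k)

theorem measureReal_pi_range_subset (μ : Measure α) [SigmaFinite μ] (S : Set α) :
    (Measure.pi fun _ : ι => μ).real {f | Set.range f ⊆ S} = μ.real S ^ Fintype.card ι := by
  have hpi : {f : ι → α | Set.range f ⊆ S} = Set.univ.pi fun _ => S := by
    ext f; simp [Set.range_subset_iff]
  rw [measureReal_def, hpi, Measure.pi_pi, Finset.prod_const, Finset.card_univ,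
    ENNReal.toReal_pow, measureReal_def]

variable [MeasurableSingletonClass α] (μ : Measure α) [IsProbabilityMeasure μ]

theorem measureReal_pi_mem_range (a : α) :
    (Measure.pi fun _ : ι => μ).real {f | a ∈ Set.range f}
      = 1 - (1 - μ.real {a}) ^ Fintype.card ι := by
  rw [← probReal_compl_eq_one_sub (measurableSet_singleton a), ← measureReal_pi_range_subset,
    ← compl_setOf_mem_range, probReal_compl_eq_one_sub (measurableSet_mem_range a),
    sub_sub_cancel]

theorem measureReal_pi_mem_range_and_mem_range {a b : α} (hab : a ≠ b) :
    (Measure.pi fun _ : ι => μ).real {f | a ∈ Set.range f ∧ b ∈ Set.range f}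
      = 1 - (1 - μ.real {a}) ^ Fintype.card ι - (1 - μ.real {b}) ^ Fintype.card ι
        + (1 - μ.real {a} - μ.real {b}) ^ Fintype.card ι := by
  have hmiss_both : {f : ι → α | a ∈ Set.range f}ᶜ ∩ {f | b ∈ Set.range f}ᶜ
      = {f | Set.range f ⊆ {a, b}ᶜ} := by
    ext f; simp [Set.range_subset_iff, forall_and]
  have hpair : μ.real ({a, b} : Set α)ᶜ = 1 - μ.real {a} - μ.real {b} := by
    rw [probReal_compl_eq_one_sub ((measurableSet_singleton b).insert a), Set.insert_eq,
      measureReal_union (Set.disjoint_singleton.mpr hab) (measurableSet_singleton b),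
      sub_add_eq_sub_sub]
  rw [Set.ofPred_and,
    probReal_inter_eq_one_sub_compl _ (measurableSet_mem_range a) (measurableSet_mem_range b),
    hmiss_both, compl_setOf_mem_range, compl_setOf_mem_range, measureReal_pi_range_subset,
    measureReal_pi_range_subset, measureReal_pi_range_subset, hpair,
    probReal_compl_eq_one_sub (measurableSet_singleton a),
    probReal_compl_eq_one_sub (measurableSet_singleton b)]

end SamplingWithReplacement

theorem fastgae_explicit_expected_loss_with_replacement_general
    {V : Type*} [Fintype V] [DecidableEq V] [MeasurableSpace V]
    [MeasurableSingletonClass V]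
    (p : V → ℝ) (hp : ∀ i, 0 ≤ p i)
    (μ : Measure V) [IsProbabilityMeasure μ]
    (hμ : ∀ i, μ {i} = ENNReal.ofReal (p i))
    (nS : ℕ)
    (L : V × V → ℝ) :
    ∫ f, (1 / (nS : ℝ) ^ 2) * ∑ ij : V × V,
        (if (∃ k, f k = ij.1) ∧ (∃ k, f k = ij.2) then (1 : ℝ) else 0) * L ij
      ∂(Measure.pi fun _ : Fin nS => μ)
      = (1 / (nS : ℝ) ^ 2) *
          ((∑ i : V, (1 - (1 - p i) ^ nS) * L (i, i)) +
            ∑ ij ∈ Finset.univ.filter (fun ij : V × V => ij.1 ≠ ij.2),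
              (1 - (1 - p ij.1) ^ nS - (1 - p ij.2) ^ nS
                + (1 - p ij.1 - p ij.2) ^ nS) * L ij) := by
  have hpoint : ∀ i, μ.real {i} = p i := fun i => by simp [measureReal_def, hμ, hp i]
  have hmeas : ∀ ij : V × V,
      MeasurableSet {f : Fin nS → V | ij.1 ∈ Set.range f ∧ ij.2 ∈ Set.range f} :=
    fun ij => (measurableSet_mem_range ij.1).inter (measurableSet_mem_range ij.2)
  simp only [← Set.mem_range]
  rw [integral_const_mul, integral_sum_ite_mul _ hmeas]
  congr 1
  rw [Fintype.sum_prod_eq_sum_diag_add_sum_ne]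
  congr 1
  · refine Finset.sum_congr rfl fun i _ => ?_
    simp only [and_self]
    rw [measureReal_pi_mem_range μ i, hpoint, Fintype.card_fin]
  · refine Finset.sum_congr rfl fun ij hij => ?_
    rw [measureReal_pi_mem_range_and_mem_range μ (Finset.mem_filter.mp hij).2, hpoint, hpoint,
      Fintype.card_fin]

theorem fastgae_explicit_expected_loss_with_replacement
    {V : Type*} [Fintype V] [DecidableEq V] [MeasurableSpace V]
    [MeasurableSingletonClass V]
    (p : V → ℝ) (hp : ∀ i, 0 ≤ p i) (hsum : ∑ i, p i = 1)
    (μ : Measure V) [IsProbabilityMeasure μ]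
    (hμ : ∀ i, μ {i} = ENNReal.ofReal (p i))
    (nS : ℕ) (hnS : 1 ≤ nS)
    (L : V × V → ℝ) :
    ∫ f, (1 / (nS : ℝ) ^ 2) * ∑ ij : V × V,
        (if (∃ k, f k = ij.1) ∧ (∃ k, f k = ij.2) then (1 : ℝ) else 0) * L ij
      ∂(Measure.pi fun _ : Fin nS => μ)
      = (1 / (nS : ℝ) ^ 2) *
          ((∑ i : V, (1 - (1 - p i) ^ nS) * L (i, i)) +
            ∑ ij ∈ Finset.univ.filter (fun ij : V × V => ij.1 ≠ ij.2),
              (1 - (1 - p ij.1) ^ nS - (1 - p ij.2) ^ nS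
                + (1 - p ij.1 - p ij.2) ^ nS) * L ij) :=
  fastgae_explicit_expected_loss_with_replacement_general p hp μ hμ nS L
end
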